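/- arXiv:2307.10082 — 2 statements merged into one kernel-verified Lean document; each statement's English description precedes it below -/
import Mathlib

section
/- The minimum over all 1 ≤ i ≤ j ≤ n of Θ(τq, τd[i:j]) equals the minimum over all matching sequences a : {1,…,m} → {1,…,n} of Σ_{k=1}^{m} Cost(k,a). -/
/-- `a` is a matching sequence on indices `1..m` with values in `[lo, hi]`:
it is monotone nondecreasing on `{1,…,m}` and `lo ≤ a i ≤ hi` there. -/
def IsMatchingOn (m lo hi : ℕ) (a : ℕ → ℕ) : Prop :=
  (∀ i, 1 ≤ i → i ≤ m → lo ≤ a i ∧ a i ≤ hi) ∧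
  ∀ i j, 1 ≤ i → i ≤ j → j ≤ m → a i ≤ a j

/-- Conversion cost `Cost(i, a)` of the `i`-th query point under a matching sequence `a`. -/
noncomputable def convCost (CostDel CostSub : ℕ → ℕ → ℝ) (CostIns : ℕ → ℕ → ℕ → ℝ)
    (a : ℕ → ℕ) (i : ℕ) : ℝ :=
  if i = 1 then CostSub 1 (a 1)
  else if a (i - 1) = a i then CostDel i (a i)
  else if a (i - 1) = a i - 1 then CostSub i (a i)
  else CostIns i (a (i - 1)) (a i)

/-- Total conversion cost `Σ_{k=1}^{m} Cost(k, a)`. -/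
noncomputable def totalCost (CostDel CostSub : ℕ → ℕ → ℝ) (CostIns : ℕ → ℕ → ℕ → ℝ)
    (m : ℕ) (a : ℕ → ℕ) : ℝ :=
  ∑ k ∈ Finset.Icc 1 m, convCost CostDel CostSub CostIns a k

/-- The general distance `Θ(τq, τd[i:j])`: the minimum over matching sequences `a`
with all values in `{i,…,j}` of
`Insert(i..a(1)−1) + Σ_{k=1}^{m} Cost(k,a) + Insert(a(m)+1..j)`. -/
noncomputable def Theta (Ins : ℕ → ℕ → ℝ) (CostDel CostSub : ℕ → ℕ → ℝ)
    (CostIns : ℕ → ℕ → ℕ → ℝ) (m i j : ℕ) : ℝ :=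
  sInf {v : ℝ | ∃ a : ℕ → ℕ, IsMatchingOn m i j a ∧
    v = Ins i (a 1 - 1) + totalCost CostDel CostSub CostIns m a + Ins (a m + 1) j}

lemma convCost_nonneg (CostDel CostSub : ℕ → ℕ → ℝ) (CostIns : ℕ → ℕ → ℕ → ℝ)
    (hDel : ∀ i j, 0 ≤ CostDel i j) (hSub : ∀ i j, 0 ≤ CostSub i j)
    (hIns : ∀ i k j, 0 ≤ CostIns i k j) (a : ℕ → ℕ) (i : ℕ) :
    0 ≤ convCost CostDel CostSub CostIns a i := by
  unfold convCost; split_ifs <;> first | apply hDel | apply hSub | apply hIns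

lemma totalCost_nonneg (CostDel CostSub : ℕ → ℕ → ℝ) (CostIns : ℕ → ℕ → ℕ → ℝ)
    (hDel : ∀ i j, 0 ≤ CostDel i j) (hSub : ∀ i j, 0 ≤ CostSub i j)
    (hIns : ∀ i k j, 0 ≤ CostIns i k j) (m : ℕ) (a : ℕ → ℕ) :
    0 ≤ totalCost CostDel CostSub CostIns m a :=
  Finset.sum_nonneg fun k _ => convCost_nonneg _ _ _ hDel hSub hIns a k

/-- The minimum over all `1 ≤ i ≤ j ≤ n` of `Θ(τq, τd[i:j])` equals the
minimum over all matching sequences `a : {1,…,m} → {1,…,n}` of `Σ_{k=1}^{m} Cost(k,a)`. -/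
theorem min_theta_eq_min_matching_cost
    (m n : ℕ) (hm : 1 ≤ m) (hn : 1 ≤ n)
    (CostDel CostSub : ℕ → ℕ → ℝ) (CostIns : ℕ → ℕ → ℕ → ℝ) (Ins : ℕ → ℕ → ℝ)
    (hDel : ∀ i j, 0 ≤ CostDel i j) (hSub : ∀ i j, 0 ≤ CostSub i j)
    (hIns : ∀ i k j, 0 ≤ CostIns i k j) (hInsNN : ∀ x y, 0 ≤ Ins x y)
    (hInsEmpty : ∀ x y, y < x → Ins x y = 0) :
    sInf {v : ℝ | ∃ i j : ℕ, 1 ≤ i ∧ i ≤ j ∧ j ≤ n ∧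
        v = Theta Ins CostDel CostSub CostIns m i j} =
      sInf {v : ℝ | ∃ a : ℕ → ℕ, IsMatchingOn m 1 n a ∧
        v = totalCost CostDel CostSub CostIns m a} := by
  set R := {v : ℝ | ∃ a : ℕ → ℕ, IsMatchingOn m 1 n a ∧
        v = totalCost CostDel CostSub CostIns m a} with hR
  have hTot := totalCost_nonneg CostDel CostSub CostIns hDel hSub hIns m
  have hRbdd : BddBelow R := ⟨0, fun v ⟨a, _, hv⟩ => hv ▸ hTot a⟩
  -- bounded below / nonneg of the Theta inner sets
  have hSbdd : ∀ i j : ℕ, BddBelow {v : ℝ | ∃ a : ℕ → ℕ, IsMatchingOn m i j a ∧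
      v = Ins i (a 1 - 1) + totalCost CostDel CostSub CostIns m a + Ins (a m + 1) j} := by
    intro i j
    refine ⟨0, fun v ⟨a, _, hv⟩ => ?_⟩
    have := hTot a
    have := hInsNN i (a 1 - 1)
    have := hInsNN (a m + 1) j
    linarith [hv.le, hv.ge]
  have hThetaNN : ∀ i j : ℕ, 0 ≤ Theta Ins CostDel CostSub CostIns m i j := by
    intro i j
    apply Real.sInf_nonneg
    rintro v ⟨a, _, rfl⟩
    have := hTot a
    have := hInsNN i (a 1 - 1)
    have := hInsNN (a m + 1) j
    linarith
  apply le_antisymm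
  · -- sInf L ≤ sInf R
    refine le_csInf ⟨totalCost CostDel CostSub CostIns m (fun _ => 1),
      fun _ => 1, ⟨fun i h1 h2 => ⟨le_refl 1, hn⟩, fun i j _ _ _ => le_refl 1⟩, rfl⟩ ?_
    rintro v ⟨a, ha, rfl⟩
    have ha1 : 1 ≤ a 1 := (ha.1 1 le_rfl hm).1
    have ham : a m ≤ n := (ha.1 m hm le_rfl).2
    have h1m : a 1 ≤ a m := ha.2 1 m le_rfl hm le_rfl
    have hmem : Theta Ins CostDel CostSub CostIns m (a 1) (a m) ∈
        {v : ℝ | ∃ i j : ℕ, 1 ≤ i ∧ i ≤ j ∧ j ≤ n ∧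
          v = Theta Ins CostDel CostSub CostIns m i j} :=
      ⟨a 1, a m, ha1, h1m, ham, rfl⟩
    have hbddL : BddBelow {v : ℝ | ∃ i j : ℕ, 1 ≤ i ∧ i ≤ j ∧ j ≤ n ∧
        v = Theta Ins CostDel CostSub CostIns m i j} :=
      ⟨0, fun v ⟨i, j, _, _, _, hv⟩ => hv ▸ hThetaNN i j⟩
    refine le_trans (csInf_le hbddL hmem) ?_
    -- Theta (a 1) (a m) ≤ totalCost a
    have hmem2 : totalCost CostDel CostSub CostIns m a ∈
        {v : ℝ | ∃ b : ℕ → ℕ, IsMatchingOn m (a 1) (a m) b ∧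
          v = Ins (a 1) (b 1 - 1) + totalCost CostDel CostSub CostIns m b + Ins (b m + 1) (a m)} := by
      refine ⟨a, ⟨fun i h1 h2 => ⟨ha.2 1 i le_rfl h1 h2, ha.2 i m h1 h2 le_rfl⟩, ha.2⟩, ?_⟩
      rw [hInsEmpty _ _ (Nat.sub_lt ha1 one_pos), hInsEmpty _ _ (Nat.lt_succ_self _)]
      ring
    exact csInf_le (hSbdd _ _) hmem2
  · -- sInf R ≤ sInf L
    refine le_csInf ⟨Theta Ins CostDel CostSub CostIns m 1 1, 1, 1, le_rfl, le_rfl, hn, rfl⟩ ?_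
    rintro v ⟨i, j, hi, hij, hj, rfl⟩
    refine le_csInf ⟨Ins i ((fun _ => i) 1 - 1) +
      totalCost CostDel CostSub CostIns m (fun _ => i) + Ins ((fun _ => i) m + 1) j,
      fun _ => i, ⟨fun k _ _ => ⟨le_rfl, hij⟩, fun _ _ _ _ _ => le_rfl⟩, rfl⟩ ?_
    rintro w ⟨a, ha, rfl⟩
    have hmemR : totalCost CostDel CostSub CostIns m a ∈ R :=
      ⟨a, ⟨fun k h1 h2 => ⟨le_trans hi (ha.1 k h1 h2).1, le_trans (ha.1 k h1 h2).2 hj⟩, ha.2⟩, rfl⟩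
    have := csInf_le hRbdd hmemR
    have := hInsNN i (a 1 - 1)
    have := hInsNN (a m + 1) j
    linarith
end

section
/- Define the array F(i,j) for 1 ≤ i ≤ m, 1 ≤ j ≤ n by F(1,j) = δ(1,j); F(i,1) = max{ F(i−1,1), δ(i,1) } for i > 1; and F(i,j) = max{ min{ F(i−1,j), F(i,j−1), F(i−1,j−1) }, δ(i,j) } for i > 1 and j > 1. Then the minimum over 1 ≤ j ≤ n of F(m,j) equals the minimum over all 1 ≤ i ≤ j ≤ n of fr(τq, τd[i:j]). -/
/-- The discrete Fréchet distance `fr(σ[1:i], ρ[1:j])` between the length-`i` prefix of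
`σ` and the length-`j` prefix of `ρ` (the values for `i = 0` or `j = 0` are irrelevant
placeholders). -/
noncomputable def frA {P : Type*} [MetricSpace P] (σ ρ : ℕ → P) : ℕ → ℕ → ℝ
  | 0, _ => 0
  | _ + 1, 0 => 0
  | 1, j + 1 =>
      (Finset.Icc 1 (j + 1)).sup' (Finset.nonempty_Icc.mpr (by omega))
        fun k => dist (σ 1) (ρ k)
  | i + 2, 1 =>
      (Finset.Icc 1 (i + 2)).sup' (Finset.nonempty_Icc.mpr (by omega))
        fun k => dist (σ k) (ρ 1)
  | i + 2, j + 2 =>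
      max (min (min (frA σ ρ (i + 1) (j + 2)) (frA σ ρ (i + 2) (j + 1)))
          (frA σ ρ (i + 1) (j + 1)))
        (dist (σ (i + 2)) (ρ (j + 2)))

section Aux

open Finset

private lemma inf'_max_const {s : Finset ℕ} (H : s.Nonempty) (f : ℕ → ℝ) (d : ℝ) :
    s.inf' H (fun k => max (f k) d) = max (s.inf' H f) d := by
  have h := Finset.apply_inf'_eq_inf'_comp (s := s) H (f := f) (fun x => max x d)
    (fun x y => sup_inf_right x y d)
  simp only [Function.comp_def] at h
  exact h.symm

private lemma inf'_min' {s : Finset ℕ} (H : s.Nonempty) (f g : ℕ → ℝ) :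
    s.inf' H (fun k => min (f k) (g k)) = min (s.inf' H f) (s.inf' H g) := by
  apply le_antisymm
  · apply le_min
    · exact Finset.le_inf' H _ fun k hk =>
        (Finset.inf'_le _ hk).trans (min_le_left _ _)
    · exact Finset.le_inf' H _ fun k hk =>
        (Finset.inf'_le _ hk).trans (min_le_right _ _)
  · exact Finset.le_inf' H _ fun k hk =>
      min_le_min (Finset.inf'_le _ hk) (Finset.inf'_le _ hk)


private lemma inf'_Icc_one (f : ℕ → ℝ) :
    (Finset.Icc 1 1).inf' (Finset.nonempty_Icc.mpr le_rfl) f = f 1 := by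
  apply le_antisymm
  · exact Finset.inf'_le _ (by simp)
  · exact Finset.le_inf' _ _ fun k hk => by
      rw [Finset.mem_Icc] at hk
      rw [show k = 1 from by omega]

private lemma inf'_Icc_succ {j : ℕ} (hj : 1 ≤ j) (f : ℕ → ℝ) :
    (Finset.Icc 1 (j + 1)).inf' (Finset.nonempty_Icc.mpr (by omega)) f =
      min (f (j + 1)) ((Finset.Icc 1 j).inf' (Finset.nonempty_Icc.mpr hj) f) := by
  apply le_antisymm
  · apply le_min
    · exact Finset.inf'_le _ (by simp)
    · exact Finset.le_inf' _ _ fun k hk => Finset.inf'_le _ (by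
        rw [Finset.mem_Icc] at hk ⊢; omega)
  · apply Finset.le_inf' _ _ fun k hk => ?_
    rw [Finset.mem_Icc] at hk
    rcases eq_or_lt_of_le hk.2 with h | h
    · rw [h]; exact min_le_left _ _
    · exact (min_le_right _ _).trans (Finset.inf'_le _ (by rw [Finset.mem_Icc]; omega))

private lemma sup'_Icc_succ {j : ℕ} (hj : 1 ≤ j) (f : ℕ → ℝ) :
    (Finset.Icc 1 (j + 1)).sup' (Finset.nonempty_Icc.mpr (by omega)) f =
      max (f (j + 1)) ((Finset.Icc 1 j).sup' (Finset.nonempty_Icc.mpr hj) f) := by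
  apply le_antisymm
  · apply Finset.sup'_le _ _ fun k hk => ?_
    rw [Finset.mem_Icc] at hk
    rcases eq_or_lt_of_le hk.2 with h | h
    · rw [h]; exact le_max_left _ _
    · exact (Finset.le_sup' _ (by rw [Finset.mem_Icc]; omega)).trans (le_max_right _ _)
  · apply max_le
    · exact Finset.le_sup' _ (by simp)
    · exact Finset.sup'_le _ _ fun k hk => Finset.le_sup' _ (by
        rw [Finset.mem_Icc] at hk ⊢; omega)

private lemma frA_row {P : Type*} [MetricSpace P] (σ ρ : ℕ → P) {j : ℕ} (hj : 1 ≤ j) :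
    frA σ ρ 1 j = (Finset.Icc 1 j).sup' (Finset.nonempty_Icc.mpr hj)
      (fun k => dist (σ 1) (ρ k)) := by
  obtain ⟨b, rfl⟩ : ∃ b, j = b + 1 := ⟨j - 1, by omega⟩
  rw [frA]

private lemma frA_col {P : Type*} [MetricSpace P] (σ ρ : ℕ → P) {i : ℕ} (hi : 1 ≤ i) :
    frA σ ρ i 1 = (Finset.Icc 1 i).sup' (Finset.nonempty_Icc.mpr hi)
      (fun k => dist (σ k) (ρ 1)) := by
  match i, hi with
  | 1, _ =>
    show frA σ ρ 1 1 = _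
    rw [frA_row σ ρ le_rfl]
    simp [Finset.Icc_self]
  | (a + 2), _ => rw [frA]

private lemma frA_rec {P : Type*} [MetricSpace P] (σ ρ : ℕ → P) {i j : ℕ}
    (hi : 2 ≤ i) (hj : 2 ≤ j) :
    frA σ ρ i j = max (min (min (frA σ ρ (i - 1) j) (frA σ ρ i (j - 1)))
      (frA σ ρ (i - 1) (j - 1))) (dist (σ i) (ρ j)) := by
  obtain ⟨a, rfl⟩ : ∃ a, i = a + 2 := ⟨i - 2, by omega⟩
  obtain ⟨b, rfl⟩ : ∃ b, j = b + 2 := ⟨j - 2, by omega⟩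
  simp only [show a + 2 - 1 = a + 1 from rfl, show b + 2 - 1 = b + 1 from rfl]
  rw [frA]

variable {P : Type*} [MetricSpace P] (τq τd : ℕ → P)

/-- `fr(τq[1:i], τd[k:j])`. -/
private noncomputable def fsub (i k j : ℕ) : ℝ :=
  frA τq (fun t => τd (k + t - 1)) i (j - k + 1)

private lemma fsub_row_ge {k j : ℕ} (hk : 1 ≤ k) (hkj : k ≤ j) :
    dist (τq 1) (τd j) ≤ fsub τq τd 1 k j := by
  rw [fsub, frA_row τq _ (by omega : 1 ≤ j - k + 1)]
  have hmem : j - k + 1 ∈ Finset.Icc 1 (j - k + 1) := by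
    simp [Finset.mem_Icc]
  have := Finset.le_sup' (fun t => dist (τq 1) (τd (k + t - 1))) hmem
  rwa [show k + (j - k + 1) - 1 = j from by omega] at this

private lemma fsub_diag_one {j : ℕ} (hj : 1 ≤ j) :
    fsub τq τd 1 j j = dist (τq 1) (τd j) := by
  rw [fsub, show j - j + 1 = 1 from by omega, frA_row τq _ le_rfl]
  simp [Finset.Icc_self, show j + 1 - 1 = j from by omega]

private lemma fsub_col {i j : ℕ} (hi : 1 ≤ i) (hj : 1 ≤ j) :
    fsub τq τd i j j = (Finset.Icc 1 i).sup' (Finset.nonempty_Icc.mpr hi)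
      (fun l => dist (τq l) (τd j)) := by
  rw [fsub, show j - j + 1 = 1 from by omega, frA_col τq _ hi]
  simp [show j + 1 - 1 = j from by omega]

private lemma fsub_diag_succ {i j : ℕ} (hi : 1 ≤ i) (hj : 1 ≤ j) :
    fsub τq τd (i + 1) j j = max (fsub τq τd i j j) (dist (τq (i + 1)) (τd j)) := by
  rw [fsub_col τq τd (by omega : 1 ≤ i + 1) hj, fsub_col τq τd hi hj,
    sup'_Icc_succ hi]
  exact max_comm _ _

private lemma fsub_rec {i k j : ℕ} (hi : 1 ≤ i) (hk : 1 ≤ k) (hkj : k ≤ j) :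
    fsub τq τd (i + 1) k (j + 1) =
      max (min (min (fsub τq τd i k (j + 1)) (fsub τq τd (i + 1) k j))
        (fsub τq τd i k j)) (dist (τq (i + 1)) (τd (j + 1))) := by
  rw [fsub, frA_rec τq _ (by omega) (by omega : 2 ≤ j + 1 - k + 1)]
  rw [show i + 1 - 1 = i from by omega, show j + 1 - k + 1 - 1 = j - k + 1 from by omega]
  rw [show k + (j + 1 - k + 1) - 1 = j + 1 from by omega]
  rfl

end Aux

/-- If `F` satisfies `F(1,j) = δ(1,j)`,
`F(i,1) = max{ F(i−1,1), δ(i,1) }` for `i > 1`, and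
`F(i,j) = max{ min{ F(i−1,j), F(i,j−1), F(i−1,j−1) }, δ(i,j) }` for `i, j > 1`, where
`δ(i,j) = dist(τq[i],τd[j])`, then
`min_{1 ≤ j ≤ n} F(m,j) = min_{1 ≤ i ≤ j ≤ n} fr(τq, τd[i:j])`. -/
theorem frechet_array_min_eq_min_subtrajectory_frechet {P : Type*} [MetricSpace P]
    (m n : ℕ) (hm : 1 ≤ m) (hn : 1 ≤ n)
    (τq τd : ℕ → P) (F : ℕ → ℕ → ℝ)
    (hF1 : ∀ j, 1 ≤ j → j ≤ n → F 1 j = dist (τq 1) (τd j))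
    (hFi1 : ∀ i, 1 < i → i ≤ m → F i 1 = max (F (i - 1) 1) (dist (τq i) (τd 1)))
    (hFij : ∀ i j, 1 < i → i ≤ m → 1 < j → j ≤ n →
      F i j = max (min (min (F (i - 1) j) (F i (j - 1))) (F (i - 1) (j - 1)))
        (dist (τq i) (τd j))) :
    sInf {v : ℝ | ∃ j : ℕ, 1 ≤ j ∧ j ≤ n ∧ v = F m j} =
      sInf {v : ℝ | ∃ i j : ℕ, 1 ≤ i ∧ i ≤ j ∧ j ≤ n ∧
        v = frA τq (fun t => τd (i + t - 1)) m (j - i + 1)} := by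
  classical
  -- the key invariant:  F i j = min_{1 ≤ k ≤ j} fr(τq[1:i], τd[k:j])
  have key : ∀ i, 1 ≤ i → i ≤ m → ∀ j, ∀ hj : 1 ≤ j, j ≤ n →
      F i j = (Finset.Icc 1 j).inf' (Finset.nonempty_Icc.mpr hj)
        (fun k => fsub τq τd i k j) := by
    intro i hi
    induction i, hi using Nat.le_induction with
    | base =>
      intro _ j hj hjn
      rw [hF1 j hj hjn]
      apply le_antisymm
      · exact Finset.le_inf' _ _ fun k hk => by
          rw [Finset.mem_Icc] at hk
          exact fsub_row_ge τq τd hk.1 hk.2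
      · have hmem : j ∈ Finset.Icc 1 j := by simp [Finset.mem_Icc, hj]
        exact (Finset.inf'_le _ hmem).trans (le_of_eq (fsub_diag_one τq τd hj))
    | succ i hi IH =>
      intro hi1 j hj
      induction j, hj using Nat.le_induction with
      | base =>
        intro h1n
        rw [hFi1 (i + 1) (by omega) hi1, show i + 1 - 1 = i from by omega,
          IH (by omega) 1 le_rfl h1n, inf'_Icc_one, inf'_Icc_one,
          fsub_diag_succ τq τd hi le_rfl]
      | succ j hj IHj =>
        intro hjn
        have hjn' : j ≤ n := by omega
        set d : ℝ := dist (τq (i + 1)) (τd (j + 1)) with hd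
        have hne : (Finset.Icc 1 j).Nonempty := Finset.nonempty_Icc.mpr hj
        have hRHS :
            (Finset.Icc 1 (j + 1)).inf' (Finset.nonempty_Icc.mpr (by omega))
              (fun k => fsub τq τd (i + 1) k (j + 1)) =
            min (fsub τq τd (i + 1) (j + 1) (j + 1))
              ((Finset.Icc 1 j).inf' hne (fun k => fsub τq τd (i + 1) k (j + 1))) :=
          inf'_Icc_succ hj _
        have hcong :
            (Finset.Icc 1 j).inf' hne (fun k => fsub τq τd (i + 1) k (j + 1)) =
            (Finset.Icc 1 j).inf' hne (fun k =>
              max (min (min (fsub τq τd i k (j + 1)) (fsub τq τd (i + 1) k j))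
                (fsub τq τd i k j)) d) := by
          apply Finset.inf'_congr hne rfl
          intro k hk
          rw [Finset.mem_Icc] at hk
          exact fsub_rec τq τd hi hk.1 hk.2
        rw [hRHS, hcong, inf'_max_const, inf'_min', inf'_min',
          fsub_diag_succ τq τd hi (by omega)]
        -- distribute:  min (max a d) (max b d) = max (min a b) d
        rw [show ∀ a b : ℝ, min (max a d) (max b d) = max (min a b) d from
          fun a b => (sup_inf_right a b d).symm]
        rw [hFij (i + 1) (j + 1) (by omega) hi1 (by omega) hjn,
          show i + 1 - 1 = i from by omega, show j + 1 - 1 = j from by omega, ← hd]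
        congr 1
        rw [IH (by omega) (j + 1) (by omega) hjn, IH (by omega) j hj hjn',
          IHj hjn', inf'_Icc_succ hj (fun k => fsub τq τd i k (j + 1))]
        simp [min_assoc]
  -- convert both sides to finset infima
  have hL : {v : ℝ | ∃ j : ℕ, 1 ≤ j ∧ j ≤ n ∧ v = F m j} =
      F m '' ↑(Finset.Icc 1 n) := by
    ext v
    simp only [Set.mem_setOf_eq, Set.mem_image, Finset.coe_Icc, Set.mem_Icc]
    constructor
    · rintro ⟨j, h1, h2, rfl⟩; exact ⟨j, ⟨h1, h2⟩, rfl⟩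
    · rintro ⟨j, ⟨h1, h2⟩, rfl⟩; exact ⟨j, h1, h2, rfl⟩
  set T : Finset (ℕ × ℕ) :=
    (Finset.Icc 1 n ×ˢ Finset.Icc 1 n).filter (fun p => p.1 ≤ p.2) with hT
  have hTmem : ∀ p : ℕ × ℕ, p ∈ T ↔ 1 ≤ p.1 ∧ p.1 ≤ p.2 ∧ p.2 ≤ n := by
    intro p
    simp only [hT, Finset.mem_filter, Finset.mem_product, Finset.mem_Icc]
    omega
  have hTne : T.Nonempty := ⟨(1, 1), (hTmem (1, 1)).mpr ⟨le_rfl, le_rfl, hn⟩⟩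
  have hR : {v : ℝ | ∃ i j : ℕ, 1 ≤ i ∧ i ≤ j ∧ j ≤ n ∧
      v = frA τq (fun t => τd (i + t - 1)) m (j - i + 1)} =
      (fun p : ℕ × ℕ => fsub τq τd m p.1 p.2) '' ↑T := by
    ext v
    simp only [Set.mem_setOf_eq, Set.mem_image, Finset.mem_coe]
    constructor
    · rintro ⟨i, j, h1, h2, h3, rfl⟩
      exact ⟨(i, j), (hTmem (i, j)).mpr ⟨h1, h2, h3⟩, rfl⟩
    · rintro ⟨⟨i, j⟩, hp, rfl⟩
      obtain ⟨h1, h2, h3⟩ := (hTmem (i, j)).mp hp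
      exact ⟨i, j, h1, h2, h3, rfl⟩
  rw [hL, hR, ← Finset.inf'_eq_csInf_image _ (Finset.nonempty_Icc.mpr hn),
    ← Finset.inf'_eq_csInf_image _ hTne]
  apply le_antisymm
  · apply Finset.le_inf' hTne
    intro p hp
    obtain ⟨h1, h2, h3⟩ := (hTmem p).mp hp
    have hp2 : p.2 ∈ Finset.Icc 1 n := by simp [Finset.mem_Icc]; omega
    refine (Finset.inf'_le _ hp2).trans ?_
    rw [key m hm le_rfl p.2 (by omega) h3]
    exact Finset.inf'_le _ (by simp [Finset.mem_Icc]; omega)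
  · apply Finset.le_inf' _ _
    intro j hjmem
    rw [Finset.mem_Icc] at hjmem
    rw [key m hm le_rfl j hjmem.1 hjmem.2]
    obtain ⟨k, hk, hEq⟩ := Finset.exists_mem_eq_inf'
      (Finset.nonempty_Icc.mpr hjmem.1) (fun k => fsub τq τd m k j)
    rw [Finset.mem_Icc] at hk
    rw [hEq]
    exact Finset.inf'_le _ ((hTmem (k, j)).mpr ⟨hk.1, hk.2, hjmem.2⟩)
end
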